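/- Let (Y,d) be a compact metric space and g : Y → Y a continuous surjection satisfying Axioms 1 and 2 with constants β > 0, integer K ≥ 1 and 0 < γ < 1, and fix ε' with 0 < ε' ≤ β/2 such that d̂(x,y) ≤ ε' implies d̂(ĝ^{−n}(x), ĝ^{−n}(y)) ≤ β for n = 0, 1, …, 2K−1. Then for any 0 < ε ≤ ε' and y, z ∈ Ŷ: y ∈ Ŷ^s(z, ε) if and only if y_m = z_m for m = 0, …, K−1 and d̂(y, z) ≤ ε. -/
import Mathlib


open Metric Function Topology

variable {Y : Type*} [MetricSpace Y] [CompactSpace Y]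

/-- The stationary inverse limit of `g : Y → Y`. -/
abbrev InvLim (g : Y → Y) : Type _ :=
  {y : ℕ → Y // ∀ n : ℕ, y n = g (y (n + 1))}

/-- The induced map `ĝ` on the inverse limit. -/
def ghat (g : Y → Y) (y : InvLim g) : InvLim g :=
  ⟨fun n => g (y.1 n), fun n => congrArg g (y.2 n)⟩

/-- The inverse `ĝ⁻¹` of the induced map on the inverse limit. -/
def ghatInv (g : Y → Y) (y : InvLim g) : InvLim g :=
  ⟨fun n => y.1 (n + 1), fun n => y.2 (n + 1)⟩

/-- `d'(x,y) = sup_n γ^n d(x_n, y_n)`. -/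
noncomputable def dp (g : Y → Y) (γ : ℝ) (x y : InvLim g) : ℝ :=
  ⨆ n : ℕ, γ ^ n * dist (x.1 n) (y.1 n)

/-- `d̂(x,y) = ∑_{k=0}^{K-1} γ^{-k} d'(ĝ^{-k} x, ĝ^{-k} y)`. -/
noncomputable def dhat (g : Y → Y) (γ : ℝ) (K : ℕ) (x y : InvLim g) : ℝ :=
  ∑ k ∈ Finset.range K, (γ ^ k)⁻¹ * dp g γ ((ghatInv g)^[k] x) ((ghatInv g)^[k] y)

/-- Axiom 1: `d(x,y) ≤ β` implies `d(g^K x, g^K y) ≤ γ^K d(g^{2K} x, g^{2K} y)`. -/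
def axiom1 (g : Y → Y) (β : ℝ) (K : ℕ) (γ : ℝ) : Prop :=
  ∀ x y : Y, dist x y ≤ β →
    dist (g^[K] x) (g^[K] y) ≤ γ ^ K * dist (g^[2 * K] x) (g^[2 * K] y)

/-- Axiom 2: `g^K(B(g^K x, ε)) ⊆ g^{2K}(B(x, γ ε))` for `0 < ε ≤ β`. -/
def axiom2 (g : Y → Y) (β : ℝ) (K : ℕ) (γ : ℝ) : Prop :=
  ∀ x : Y, ∀ ε : ℝ, 0 < ε → ε ≤ β →
    g^[K] '' Metric.closedBall (g^[K] x) ε ⊆ g^[2 * K] '' Metric.closedBall x (γ * ε)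

/-- The local stable set `Ŷ^s(x, ε)` in the inverse limit. -/
def Shat (g : Y → Y) (γ : ℝ) (K : ℕ) (x : InvLim g) (ε : ℝ) : Set (InvLim g) :=
  {y | ∀ n : ℕ, dhat g γ K ((ghat g)^[n] x) ((ghat g)^[n] y) ≤ ε}

/-- The local unstable set `Ŷ^u(x, ε)` in the inverse limit. -/
def Uhat (g : Y → Y) (γ : ℝ) (K : ℕ) (x : InvLim g) (ε : ℝ) : Set (InvLim g) :=
  {y | ∀ n : ℕ, dhat g γ K ((ghatInv g)^[n] x) ((ghatInv g)^[n] y) ≤ ε}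


section Aux

lemma InvLim.apply_eq (g : Y → Y) (x : InvLim g) (j m : ℕ) :
    x.1 m = g^[j] (x.1 (m + j)) := by
  induction j with
  | zero => simp
  | succ j ih =>
    rw [ih, x.2 (m + j), ← Function.iterate_succ_apply]
    rfl

lemma InvLim.iterate_apply (g : Y → Y) (x : InvLim g) {n w : ℕ} (h : n ≤ w) :
    g^[n] (x.1 w) = x.1 (w - n) := by
  have := InvLim.apply_eq g x n (w - n)
  rw [Nat.sub_add_cancel h] at this
  exact this.symm

lemma InvLim.iterate_shift (g : Y → Y) (x : InvLim g) (a b : ℕ) :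
    g^[a] (x.1 (b + a)) = x.1 b :=
  (InvLim.apply_eq g x a b).symm

lemma InvLim.iterate_self (g : Y → Y) (x : InvLim g) (a : ℕ) :
    g^[a] (x.1 a) = x.1 0 := by
  have h := (InvLim.apply_eq g x a 0).symm
  rwa [Nat.zero_add] at h

lemma ghatInv_iter_apply (g : Y → Y) (x : InvLim g) (k n : ℕ) :
    ((ghatInv g)^[k] x).1 n = x.1 (n + k) := by
  induction k generalizing x with
  | zero => rfl
  | succ k ih =>
    rw [Function.iterate_succ_apply, ih (ghatInv g x)]
    rfl

lemma ghat_iter_apply (g : Y → Y) (x : InvLim g) (n m : ℕ) :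
    ((ghat g)^[n] x).1 m = g^[n] (x.1 m) := by
  induction n generalizing x with
  | zero => rfl
  | succ n ih =>
    rw [Function.iterate_succ_apply g n (x.1 m), Function.iterate_succ_apply (ghat g) n x,
      ih (ghat g x)]
    rfl

lemma dp_nonneg (g : Y → Y) {γ : ℝ} (hγ : 0 ≤ γ) (x y : InvLim g) :
    0 ≤ dp g γ x y :=
  Real.iSup_nonneg fun n => mul_nonneg (pow_nonneg hγ n) dist_nonneg

lemma dp_bddAbove (g : Y → Y) {γ : ℝ} (hγ0 : 0 ≤ γ) (hγ1 : γ ≤ 1) (x y : InvLim g) :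
    BddAbove (Set.range fun n : ℕ => γ ^ n * dist (x.1 n) (y.1 n)) := by
  refine ⟨Metric.diam (Set.univ : Set Y), ?_⟩
  rintro _ ⟨n, rfl⟩
  calc γ ^ n * dist (x.1 n) (y.1 n) ≤ 1 * dist (x.1 n) (y.1 n) :=
        mul_le_mul_of_nonneg_right (pow_le_one₀ hγ0 hγ1) dist_nonneg
    _ = dist (x.1 n) (y.1 n) := one_mul _
    _ ≤ Metric.diam Set.univ :=
        Metric.dist_le_diam_of_mem isCompact_univ.isBounded (Set.mem_univ _) (Set.mem_univ _)

lemma le_dp (g : Y → Y) {γ : ℝ} (hγ0 : 0 ≤ γ) (hγ1 : γ ≤ 1) (x y : InvLim g) (n : ℕ) :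
    γ ^ n * dist (x.1 n) (y.1 n) ≤ dp g γ x y :=
  le_ciSup (dp_bddAbove g hγ0 hγ1 x y) n

lemma dp_comm (g : Y → Y) (γ : ℝ) (x y : InvLim g) : dp g γ x y = dp g γ y x := by
  unfold dp
  congr 1
  funext n
  rw [dist_comm]

lemma dhat_comm (g : Y → Y) (γ : ℝ) (K : ℕ) (x y : InvLim g) :
    dhat g γ K x y = dhat g γ K y x :=
  Finset.sum_congr rfl fun k _ => by rw [dp_comm]

lemma dhat_nonneg (g : Y → Y) {γ : ℝ} (hγ : 0 ≤ γ) (K : ℕ) (x y : InvLim g) :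
    0 ≤ dhat g γ K x y :=
  Finset.sum_nonneg fun k _ =>
    mul_nonneg (inv_nonneg.2 (pow_nonneg hγ k)) (dp_nonneg g hγ _ _)

lemma dist_le_dhat (g : Y → Y) {γ : ℝ} {K : ℕ} (hγ0 : 0 ≤ γ) (hγ1 : γ ≤ 1)
    (hK : 1 ≤ K) (x y : InvLim g) :
    dist (x.1 0) (y.1 0) ≤ dhat g γ K x y := by
  have h0 : dist (x.1 0) (y.1 0)
      ≤ (γ ^ 0)⁻¹ * dp g γ ((ghatInv g)^[0] x) ((ghatInv g)^[0] y) := by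
    simpa using le_dp g hγ0 hγ1 x y 0
  refine h0.trans ?_
  exact Finset.single_le_sum
    (f := fun k => (γ ^ k)⁻¹ * dp g γ ((ghatInv g)^[k] x) ((ghatInv g)^[k] y))
    (fun k _ => mul_nonneg (inv_nonneg.2 (pow_nonneg hγ0 k)) (dp_nonneg g hγ0 _ _))
    (Finset.mem_range.mpr hK)

lemma iter_coord_eq (g : Y → Y) {K : ℕ} (hK : 1 ≤ K) (y z : InvLim g)
    (hm : ∀ m < K, y.1 m = z.1 m) {n w : ℕ} (hw : w < n + K) :
    g^[n] (y.1 w) = g^[n] (z.1 w) := by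
  rcases le_or_gt n w with h | h
  · rw [InvLim.iterate_apply g y h, InvLim.iterate_apply g z h, hm (w - n) (by omega)]
  · have hy0 : ∀ x : InvLim g, g^[n] (x.1 w) = g^[n - w] (x.1 0) := by
      intro x
      conv_lhs => rw [show n = (n - w) + w by omega, Function.iterate_add_apply]
      rw [InvLim.iterate_apply g x (le_refl w), Nat.sub_self]
    rw [hy0 y, hy0 z, hm 0 hK]

lemma dhat_ghat_le (g : Y → Y) {γ : ℝ} {K : ℕ} (hγ0 : 0 < γ) (hγ1 : γ < 1)
    (hK : 1 ≤ K) (y z : InvLim g) (hm : ∀ m < K, y.1 m = z.1 m) (n : ℕ) :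
    dhat g γ K ((ghat g)^[n] y) ((ghat g)^[n] z) ≤ dhat g γ K y z := by
  refine Finset.sum_le_sum fun k hk => ?_
  refine mul_le_mul_of_nonneg_left ?_ (inv_nonneg.2 (pow_nonneg hγ0.le k))
  refine ciSup_le fun m => ?_
  rw [ghatInv_iter_apply, ghatInv_iter_apply, ghat_iter_apply, ghat_iter_apply]
  rcases lt_or_ge m n with hmn | hmn
  · have hwk : m + k < n + K := by
      have := Finset.mem_range.mp hk
      omega
    rw [iter_coord_eq g hK y z hm hwk, dist_self, mul_zero]
    exact dp_nonneg g hγ0.le _ _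
  · have hidx : m + k = ((m - n) + k) + n := by omega
    have hr : ∀ x : InvLim g, g^[n] (x.1 (m + k)) = x.1 ((m - n) + k) := by
      intro x
      rw [hidx, InvLim.iterate_shift g x n ((m - n) + k)]
    rw [hr y, hr z]
    calc γ ^ m * dist (y.1 (m - n + k)) (z.1 (m - n + k))
        ≤ γ ^ (m - n) * dist (y.1 (m - n + k)) (z.1 (m - n + k)) :=
          mul_le_mul_of_nonneg_right
            (pow_le_pow_of_le_one hγ0.le hγ1.le (Nat.sub_le m n)) dist_nonneg
      _ ≤ dp g γ ((ghatInv g)^[k] y) ((ghatInv g)^[k] z) := by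
          have := le_dp g hγ0.le hγ1.le ((ghatInv g)^[k] y) ((ghatInv g)^[k] z) (m - n)
          rwa [ghatInv_iter_apply, ghatInv_iter_apply] at this

end Aux

/-- Lemma 3.2: description of the local stable sets in the inverse limit. -/
theorem stmt5 (g : Y → Y) (hgc : Continuous g) (hgs : Function.Surjective g)
    (β γ : ℝ) (K : ℕ) (hβ : 0 < β) (hK : 1 ≤ K) (hγ0 : 0 < γ) (hγ1 : γ < 1)
    (h1 : axiom1 g β K γ) (h2 : axiom2 g β K γ)
    (ε' : ℝ) (hε'0 : 0 < ε') (hε'β : ε' ≤ β / 2)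
    (hε' : ∀ x y : InvLim g, dhat g γ K x y ≤ ε' → ∀ n : ℕ, n < 2 * K →
      dhat g γ K ((ghatInv g)^[n] x) ((ghatInv g)^[n] y) ≤ β) :
    ∀ ε : ℝ, 0 < ε → ε ≤ ε' → ∀ y z : InvLim g,
      y ∈ Shat g γ K z ε ↔ ((∀ m : ℕ, m < K → y.1 m = z.1 m) ∧ dhat g γ K y z ≤ ε) := by
  intro ε hε0 hεε' y z
  constructor
  · intro hy
    have hy' : ∀ n : ℕ, dhat g γ K ((ghat g)^[n] z) ((ghat g)^[n] y) ≤ ε := hy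
    have hyz : ∀ j : ℕ, dhat g γ K ((ghat g)^[j] y) ((ghat g)^[j] z) ≤ ε' := by
      intro j
      rw [dhat_comm]
      exact (hy' j).trans hεε'
    -- a j ≤ ε for the forward orbit distances
    have ha : ∀ j : ℕ, dist (g^[j] (y.1 0)) (g^[j] (z.1 0)) ≤ ε := by
      intro j
      have := dist_le_dhat g hγ0.le hγ1.le hK ((ghat g)^[j] y) ((ghat g)^[j] z)
      rw [ghat_iter_apply, ghat_iter_apply, dhat_comm] at this
      exact this.trans (hy' j)
    -- β bounds on coordinates up to 2K, for each forward iterate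
    have hβc : ∀ j : ℕ, ∀ m : ℕ, m < 2 * K →
        dist (g^[j] (y.1 m)) (g^[j] (z.1 m)) ≤ β := by
      intro j m hm
      have h := hε' ((ghat g)^[j] y) ((ghat g)^[j] z) (hyz j) m hm
      have h2 := dist_le_dhat g hγ0.le hγ1.le hK
        ((ghatInv g)^[m] ((ghat g)^[j] y)) ((ghatInv g)^[m] ((ghat g)^[j] z))
      rw [ghatInv_iter_apply, ghatInv_iter_apply, ghat_iter_apply, ghat_iter_apply,
        Nat.zero_add] at h2
      exact h2.trans h
    -- chain step for the forward orbit
    have e1 : ∀ (j : ℕ) (x : InvLim g), g^[K] (g^[j] (x.1 K)) = g^[j] (x.1 0) := by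
      intro j x
      rw [← Function.iterate_add_apply, add_comm K j, Function.iterate_add_apply,
        InvLim.iterate_self g x K]
    have e2 : ∀ (j : ℕ) (x : InvLim g),
        g^[2 * K] (g^[j] (x.1 K)) = g^[j + K] (x.1 0) := by
      intro j x
      rw [← Function.iterate_add_apply, show 2 * K + j = (j + K) + K by ring,
        Function.iterate_add_apply, InvLim.iterate_self g x K]
    have hstep : ∀ j : ℕ, dist (g^[j] (y.1 0)) (g^[j] (z.1 0))
        ≤ γ ^ K * dist (g^[j + K] (y.1 0)) (g^[j + K] (z.1 0)) := by
      intro j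
      have hpre : dist (g^[j] (y.1 K)) (g^[j] (z.1 K)) ≤ β := hβc j K (by omega)
      have := h1 (g^[j] (y.1 K)) (g^[j] (z.1 K)) hpre
      rwa [e1 j y, e1 j z, e2 j y, e2 j z] at this
    have hiter : ∀ r : ℕ, ∀ j : ℕ,
        dist (g^[j] (y.1 0)) (g^[j] (z.1 0)) ≤ (γ ^ K) ^ r * ε := by
      intro r
      induction r with
      | zero => intro j; simpa using ha j
      | succ r ih =>
        intro j
        calc dist (g^[j] (y.1 0)) (g^[j] (z.1 0))
            ≤ γ ^ K * dist (g^[j + K] (y.1 0)) (g^[j + K] (z.1 0)) := hstep j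
          _ ≤ γ ^ K * ((γ ^ K) ^ r * ε) :=
              mul_le_mul_of_nonneg_left (ih (j + K)) (by positivity)
          _ = (γ ^ K) ^ (r + 1) * ε := by ring
    have hγK : γ ^ K < 1 := pow_lt_one₀ hγ0.le hγ1 (by omega)
    have htend : Filter.Tendsto (fun r : ℕ => (γ ^ K) ^ r * ε) Filter.atTop (𝓝 0) := by
      have h := tendsto_pow_atTop_nhds_zero_of_lt_one (by positivity : (0:ℝ) ≤ γ ^ K) hγK
      simpa using h.mul_const ε
    have hazero : ∀ j : ℕ, dist (g^[j] (y.1 0)) (g^[j] (z.1 0)) = 0 := by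
      intro j
      have hle : dist (g^[j] (y.1 0)) (g^[j] (z.1 0)) ≤ 0 :=
        ge_of_tendsto' htend fun r => hiter r j
      exact le_antisymm hle dist_nonneg
    constructor
    · intro m hm
      have hpre : dist (y.1 (m + K)) (z.1 (m + K)) ≤ β := by
        have := hβc 0 (m + K) (by omega)
        simpa using this
      have hx := h1 (y.1 (m + K)) (z.1 (m + K)) hpre
      have eK : ∀ x : InvLim g, g^[K] (x.1 (m + K)) = x.1 m := fun x =>
        InvLim.iterate_shift g x K m
      have e2K : ∀ x : InvLim g, g^[2 * K] (x.1 (m + K)) = g^[K - m] (x.1 0) := by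
        intro x
        rw [show 2 * K = (K - m) + (m + K) by omega, Function.iterate_add_apply,
          InvLim.iterate_self g x (m + K)]
      rw [eK y, eK z, e2K y, e2K z, hazero (K - m), mul_zero] at hx
      exact dist_le_zero.mp hx
    · have := hy' 0
      simpa [dhat_comm g γ K y z] using this
  · rintro ⟨hm, hd⟩
    intro n
    have hm' : ∀ m < K, z.1 m = y.1 m := fun m h => (hm m h).symm
    calc dhat g γ K ((ghat g)^[n] z) ((ghat g)^[n] y)
        ≤ dhat g γ K z y := dhat_ghat_le g hγ0 hγ1 hK z y hm' n
      _ = dhat g γ K y z := dhat_comm g γ K z y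
      _ ≤ ε := hd
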